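/- If 𝓔 is a Bures contractive Schwarz channel on (A, τ) and ω ∈ ℂ with |ω| = 1 is an eigenvalue of 𝓔, then ω = 1. That is, the peripheral point spectrum of 𝓔 is {1}. -/

import Mathlib

open scoped ComplexOrder

/-- Fidelity F_τ(σ,ρ) = τ((ρ^{1/2} σ ρ^{1/2})^{1/2}) in a C*-algebra with trace τ. -/
noncomputable def cFid {A : Type*} [CStarAlgebra A] [PartialOrder A] [StarOrderedRing A]
    (τ : A →ₗ[ℂ] ℂ) (σ ρ : A) : ℝ :=
  (τ (CFC.sqrt (CFC.sqrt ρ * σ * CFC.sqrt ρ))).re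

/-- The Bures distance d_B(σ,ρ) = √(1 - F_τ(σ,ρ)). -/
noncomputable def cdB {A : Type*} [CStarAlgebra A] [PartialOrder A] [StarOrderedRing A]
    (τ : A →ₗ[ℂ] ℂ) (σ ρ : A) : ℝ :=
  Real.sqrt (1 - cFid τ σ ρ)

/-- Bures contractive: strictly decreases the Bures distance between distinct density
elements. -/
def IsBuresContractive {A : Type*} [CStarAlgebra A] [PartialOrder A] [StarOrderedRing A]
    (τ : A →ₗ[ℂ] ℂ) (E : A →ₗ[ℂ] A) : Prop :=
  ∀ σ ρ : A, 0 ≤ σ → 0 ≤ ρ → τ σ = 1 → τ ρ = 1 → σ ≠ ρ →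
    cdB τ (E σ) (E ρ) < cdB τ σ ρ

/-!
An eigenvector `x` for a unimodular eigenvalue `ω` attains equality in the Schwarz inequality:
`E (x⋆x) ≥ (E x)⋆ E x = x⋆x`, and both sides have the same trace, so faithfulness of `τ` gives
equality. By Choi's lemma `x` and `x⋆` then lie in the multiplicative domain of `E`, and so do the
real and imaginary parts of `x`. If `a ≥ 0` lies in the multiplicative domain, normalise `a²` and
`1` to densities `σ` and `ρ`: `E ρ = ρ`, `E σ ∝ (E a)²`, and since `τ ∘ E = τ` the fidelities
`F(σ, ρ) ∝ τ a` and `F(E σ, ρ) ∝ τ (E a)` agree, so Bures contractivity forces `σ = ρ`, i.e. `a`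
is a scalar. Shifting by `‖v‖ • 1` extends this to self-adjoint `v`, hence `x = c • 1` with
`c ≠ 0`, and `E (c • 1) = c • 1` gives `ω = 1`.
-/

open Filter Topology ComplexConjugate
open scoped ComplexStarModule

namespace BuresContractive

variable {A : Type*} [CStarAlgebra A] {E : A →ₗ[ℂ] A}

/-- A one-sided form of the multiplicative domain `M_E`; unlike `M_E` it is visibly a
submodule. -/
def mulDomain (E : A →ₗ[ℂ] A) : Submodule ℂ A where
  carrier := {a | ∀ b, E (star a * b) = star (E a) * E b}
  add_mem' {a a'} ha ha' b := by simp [add_mul, ha b, ha' b]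
  zero_mem' b := by simp
  smul_mem' c a ha b := by simp [ha b]

lemma map_star_of_mem_mulDomain (hE1 : E 1 = 1) {a : A} (ha : a ∈ mulDomain E) :
    E (star a) = star (E a) := by
  simpa [hE1] using ha 1

lemma map_mul_self_of_mem_mulDomain (hE1 : E 1 = 1) {v : A} (hv : v ∈ mulDomain E)
    (hsa : IsSelfAdjoint v) : E (v * v) = E v * E v :=
  calc E (v * v) = E (star v * v) := by rw [hsa.star_eq]
    _ = star (E v) * E v := hv v
    _ = E v * E v := by rw [← map_star_of_mem_mulDomain hE1 hv, hsa.star_eq]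

variable [PartialOrder A] {τ : A →ₗ[ℂ] ℂ}

lemma exists_smul_trace_eq_one (hpos : ∀ a : A, 0 ≤ a → 0 ≤ τ a)
    (hfaith : ∀ a : A, 0 ≤ a → τ a = 0 → a = 0) {a : A} (ha : 0 ≤ a) (ha0 : a ≠ 0) :
    ∃ r : ℝ, 0 < r ∧ τ (r • a) = 1 := by
  obtain ⟨t, ht, hτa⟩ := RCLike.nonneg_iff_exists_ofReal.mp (hpos a ha)
  have ht0 : t ≠ 0 := by
    rintro rfl
    exact ha0 (hfaith a ha (by simpa using hτa.symm))
  refine ⟨t⁻¹, inv_pos.mpr (lt_of_le_of_ne ht (Ne.symm ht0)), ?_⟩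
  rw [LinearMap.map_smul_of_tower, ← hτa, Complex.real_smul]
  push_cast
  exact inv_mul_cancel₀ (by exact_mod_cast ht0)

variable [StarOrderedRing A]

lemma nonneg_of_forall_nonneg_add_smul {R W : A} (h : ∀ t : ℝ, 0 < t → 0 ≤ R + t • W) :
    0 ≤ W := by
  have hlim : Tendsto (fun t : ℝ => t⁻¹ • R + W) atTop (𝓝 W) := by
    simpa using ((tendsto_inv_atTop_zero (𝕜 := ℝ)).smul_const R).add_const W
  refine ge_of_tendsto hlim ((eventually_gt_atTop 0).mono fun t ht => ?_)
  have : t⁻¹ • R + W = t⁻¹ • (R + t • W) := by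
    rw [smul_add, smul_smul, inv_mul_cancel₀ ht.ne', one_smul]
  rw [this]
  exact smul_nonneg (inv_nonneg.mpr ht.le) (h t ht)

lemma eq_zero_of_forall_nonneg_add_smul {R W : A} (h : ∀ t : ℝ, 0 ≤ R + t • W) : W = 0 :=
  le_antisymm
    (neg_nonneg.mp <| nonneg_of_forall_nonneg_add_smul fun t _ => by simpa using h (-t))
    (nonneg_of_forall_nonneg_add_smul fun t _ => h t)

/-- The Schwarz inequality at `b + l • a`, whose `|l|²` terms cancel by the hypothesis on `a`. -/
lemma schwarz_defect_add_smul_nonneg (hE : ∀ x : A, star (E x) * E x ≤ E (star x * x))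
    {a : A} (ha : E (star a * a) = star (E a) * E a) (b : A) (l : ℂ) :
    0 ≤ (E (star b * b) - star (E b) * E b) + l • (E (star b * a) - star (E b) * E a)
      + conj l • (E (star a * b) - star (E a) * E b) := by
  convert sub_nonneg.mpr (hE (b + l • a)) using 1
  simp only [map_add, map_smul, star_add, star_smul, add_mul, mul_add, smul_mul_assoc,
    mul_smul_comm, RCLike.star_def, ha]
  module

/-- Choi's lemma. -/
lemma mem_mulDomain_of_map_star_mul_self (hE : ∀ x : A, star (E x) * E x ≤ E (star x * x))
    {a : A} (ha : E (star a * a) = star (E a) * E a) : a ∈ mulDomain E := by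
  intro b
  set R := E (star b * b) - star (E b) * E b
  set T := E (star b * a) - star (E b) * E a
  set S := E (star a * b) - star (E a) * E b
  have hsum : T + S = 0 := eq_zero_of_forall_nonneg_add_smul (R := R) fun t => by
    convert schwarz_defect_add_smul_nonneg hE ha b t using 1
    rw [Complex.conj_ofReal, Complex.coe_smul, Complex.coe_smul, smul_add, add_assoc]
  have hdiff : Complex.I • (T - S) = 0 := eq_zero_of_forall_nonneg_add_smul (R := R) fun t => by
    convert schwarz_defect_add_smul_nonneg hE ha b (t * Complex.I) using 1
    rw [map_mul (starRingEnd ℂ), Complex.conj_ofReal, Complex.conj_I]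
    module
  have hTS : T = S := sub_eq_zero.mp ((smul_eq_zero.mp hdiff).resolve_left Complex.I_ne_zero)
  rw [← sub_eq_zero]
  simpa [hTS, ← two_smul ℂ] using hsum

lemma eq_of_le_of_trace_eq (hfaith : ∀ a : A, 0 ≤ a → τ a = 0 → a = 0) {a b : A} (hab : a ≤ b)
    (h : τ a = τ b) : a = b :=
  (sub_eq_zero.mp (hfaith _ (sub_nonneg.mpr hab) (by rw [map_sub, h, sub_self]))).symm

lemma map_nonneg_of_schwarz (hE : ∀ x : A, star (E x) * E x ≤ E (star x * x)) {a : A}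
    (ha : 0 ≤ a) : 0 ≤ E a := by
  have h : star (CFC.sqrt a) * CFC.sqrt a = a := by
    rw [(CFC.sqrt_nonneg a).isSelfAdjoint.star_eq, CFC.sqrt_mul_sqrt_self a ha]
  calc 0 ≤ star (E (CFC.sqrt a)) * E (CFC.sqrt a) := star_mul_self_nonneg _
    _ ≤ E a := (hE _).trans_eq (by rw [h])

lemma map_one_of_schwarz (hE : ∀ x : A, star (E x) * E x ≤ E (star x * x))
    (hEtrace : ∀ x : A, τ (E x) = τ x) (hfaith : ∀ a : A, 0 ≤ a → τ a = 0 → a = 0) :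
    E 1 = 1 := by
  have hsq : star (E 1) * E 1 ≤ E 1 := by simpa using hE 1
  have hnonneg : 0 ≤ E 1 := (star_mul_self_nonneg _).trans hsq
  have hnorm : ‖E 1‖ ≤ 1 := by
    have := CStarAlgebra.norm_le_norm_of_nonneg_of_le (star_mul_self_nonneg _) hsq
    rw [CStarRing.norm_star_mul_self] at this
    nlinarith [norm_nonneg (E 1)]
  exact eq_of_le_of_trace_eq hfaith ((CStarAlgebra.norm_le_one_iff_of_nonneg _ hnonneg).mp hnorm)
    (hEtrace 1)

lemma map_star_mul_self_of_eigen (hE : ∀ x : A, star (E x) * E x ≤ E (star x * x))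
    (hEtrace : ∀ x : A, τ (E x) = τ x) (hfaith : ∀ a : A, 0 ≤ a → τ a = 0 → a = 0)
    {ω : ℂ} (hω : ‖ω‖ = 1) {x : A} (heig : E x = ω • x) :
    E (star x * x) = star (E x) * E x := by
  have hfix : star (E x) * E x = star x * x := by
    rw [heig, star_smul, smul_mul_smul_comm, RCLike.star_def, Complex.conj_mul', hω]
    simp
  rw [hfix]
  exact (eq_of_le_of_trace_eq hfaith (hfix ▸ hE x) (hEtrace _).symm).symm

lemma mem_mulDomain_of_eigen (hE : ∀ x : A, star (E x) * E x ≤ E (star x * x))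
    (hEtrace : ∀ x : A, τ (E x) = τ x) (hfaith : ∀ a : A, 0 ≤ a → τ a = 0 → a = 0)
    (hE1 : E 1 = 1) {ω : ℂ} (hω : ‖ω‖ = 1) {x : A} (heig : E x = ω • x) :
    x ∈ mulDomain E ∧ star x ∈ mulDomain E := by
  have hx := mem_mulDomain_of_map_star_mul_self hE
    (map_star_mul_self_of_eigen hE hEtrace hfaith hω heig)
  refine ⟨hx, mem_mulDomain_of_map_star_mul_self hE (map_star_mul_self_of_eigen hE hEtrace hfaith
    (ω := conj ω) (by simpa using hω) ?_)⟩
  rw [map_star_of_mem_mulDomain hE1 hx, heig, star_smul, RCLike.star_def]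

lemma sqrt_algebraMap_real {s : ℝ} (hs : 0 ≤ s) :
    CFC.sqrt (algebraMap ℝ A s) = algebraMap ℝ A √s :=
  CFC.sqrt_unique (by rw [← map_mul, Real.mul_self_sqrt hs])
    (algebraMap_nonneg A (Real.sqrt_nonneg s))

lemma cFid_smul_mul_self_algebraMap (τ : A →ₗ[ℂ] ℂ) {b : A} (hb : 0 ≤ b) {r s : ℝ}
    (hr : 0 ≤ r) (hs : 0 ≤ s) :
    cFid τ (r • (b * b)) (algebraMap ℝ A s) = √(s * r) * (τ b).re := by
  have hconj : algebraMap ℝ A √s * (r • (b * b)) * algebraMap ℝ A √s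
      = (√(s * r) • b) * (√(s * r) • b) := by
    simp only [Algebra.algebraMap_eq_smul_one, smul_mul_assoc, mul_smul_comm, one_mul, mul_one,
      smul_smul]
    congr 1
    rw [Real.mul_self_sqrt (mul_nonneg hs hr)]
    linear_combination r * Real.mul_self_sqrt hs
  rw [cFid, sqrt_algebraMap_real hs, hconj,
    CFC.sqrt_mul_self _ (smul_nonneg (Real.sqrt_nonneg _) hb), LinearMap.map_smul_of_tower,
    Complex.real_smul, Complex.re_ofReal_mul]

lemma eq_algebraMap_of_map_mul_self (hpos : ∀ a : A, 0 ≤ a → 0 ≤ τ a)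
    (hfaith : ∀ a : A, 0 ≤ a → τ a = 0 → a = 0) (hEtrace : ∀ x : A, τ (E x) = τ x)
    (hEpos : ∀ a : A, 0 ≤ a → 0 ≤ E a) (hE1 : E 1 = 1) (hBC : IsBuresContractive τ E)
    {a : A} (ha : 0 ≤ a) (hmul : E (a * a) = E a * E a) : ∃ c : ℝ, a = algebraMap ℝ A c := by
  rcases eq_or_ne a 0 with rfl | ha0
  · exact ⟨0, (map_zero _).symm⟩
  have : Nontrivial A := ⟨⟨a, 0, ha0⟩⟩
  have haa : 0 ≤ a * a := ha.isSelfAdjoint.mul_self_nonneg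
  have haa0 : a * a ≠ 0 := by
    simpa [ha.isSelfAdjoint.star_eq] using (CStarRing.star_mul_self_ne_zero_iff a).mpr ha0
  obtain ⟨r, hr, hσ⟩ := exists_smul_trace_eq_one hpos hfaith haa haa0
  obtain ⟨s, hs, hρ⟩ := exists_smul_trace_eq_one hpos hfaith zero_le_one one_ne_zero
  have hfid : cFid τ (E (r • (a * a))) (E (s • 1)) = cFid τ (r • (a * a)) (s • 1) := by
    rw [LinearMap.map_smul_of_tower, LinearMap.map_smul_of_tower, hmul, hE1,
      ← Algebra.algebraMap_eq_smul_one, cFid_smul_mul_self_algebraMap τ (hEpos a ha) hr.le hs.le,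
      cFid_smul_mul_self_algebraMap τ ha hr.le hs.le, hEtrace]
  have hσρ : r • (a * a) = s • (1 : A) := by
    by_contra hne
    have hlt := hBC _ _ (smul_nonneg hr.le haa) (smul_nonneg hs.le zero_le_one) hσ hρ hne
    rw [cdB, cdB, hfid] at hlt
    exact lt_irrefl _ hlt
  have haa_eq : a * a = algebraMap ℝ A (s / r) := by
    rw [Algebra.algebraMap_eq_smul_one, div_eq_inv_mul, mul_smul, ← hσρ, smul_smul,
      inv_mul_cancel₀ hr.ne', one_smul]
  exact ⟨√(s / r), by
    rw [← CFC.sqrt_mul_self a ha, haa_eq, sqrt_algebraMap_real (div_nonneg hs.le hr.le)]⟩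

lemma eq_algebraMap_of_isSelfAdjoint (hpos : ∀ a : A, 0 ≤ a → 0 ≤ τ a)
    (hfaith : ∀ a : A, 0 ≤ a → τ a = 0 → a = 0) (hEtrace : ∀ x : A, τ (E x) = τ x)
    (hEpos : ∀ a : A, 0 ≤ a → 0 ≤ E a) (hE1 : E 1 = 1) (hBC : IsBuresContractive τ E)
    {v : A} (hv : IsSelfAdjoint v) (hmul : E (v * v) = E v * E v) :
    ∃ c : ℝ, v = algebraMap ℝ A c := by
  have hnonneg : 0 ≤ algebraMap ℝ A ‖v‖ + v :=
    neg_le_iff_add_nonneg'.mp hv.neg_algebraMap_norm_le_self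
  obtain ⟨c, hc⟩ := eq_algebraMap_of_map_mul_self hpos hfaith hEtrace hEpos hE1 hBC hnonneg (by
    simp only [Algebra.algebraMap_eq_smul_one, add_mul, mul_add, smul_mul_assoc, mul_smul_comm,
      one_mul, mul_one, map_add, LinearMap.map_smul_of_tower, hE1, hmul])
  exact ⟨c - ‖v‖, by rw [map_sub, ← hc, add_sub_cancel_left]⟩

lemma exists_eq_algebraMap_of_mem_mulDomain (hpos : ∀ a : A, 0 ≤ a → 0 ≤ τ a)
    (hfaith : ∀ a : A, 0 ≤ a → τ a = 0 → a = 0) (hEtrace : ∀ x : A, τ (E x) = τ x)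
    (hEpos : ∀ a : A, 0 ≤ a → 0 ≤ E a) (hE1 : E 1 = 1) (hBC : IsBuresContractive τ E)
    {a : A} (ha : a ∈ mulDomain E) (ha' : star a ∈ mulDomain E) :
    ∃ c : ℂ, a = algebraMap ℂ A c := by
  have hscalar : ∀ v ∈ mulDomain E, IsSelfAdjoint v → ∃ c : ℝ, v = algebraMap ℝ A c :=
    fun v hv hsa => eq_algebraMap_of_isSelfAdjoint hpos hfaith hEtrace hEpos hE1 hBC hsa
      (map_mul_self_of_mem_mulDomain hE1 hv hsa)
  obtain ⟨c₁, hc₁⟩ := hscalar (ℜ a) (by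
    rw [realPart_apply_coe]
    exact Submodule.smul_of_tower_mem _ _ (add_mem ha ha')) (ℜ a).prop
  obtain ⟨c₂, hc₂⟩ := hscalar (ℑ a) (by
    rw [imaginaryPart_apply_coe]
    exact Submodule.smul_mem _ _ (Submodule.smul_of_tower_mem _ _ (sub_mem ha ha'))) (ℑ a).prop
  refine ⟨c₁ + Complex.I * c₂, ?_⟩
  rw [← realPart_add_I_smul_imaginaryPart a, hc₁, hc₂, map_add, map_mul, Algebra.smul_def,
    IsScalarTower.algebraMap_apply ℝ ℂ A, IsScalarTower.algebraMap_apply ℝ ℂ A]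
  rfl

end BuresContractive

open BuresContractive in
theorem peripheral_point_spectrum_trivial_general {A : Type*}
    [CStarAlgebra A] [PartialOrder A] [StarOrderedRing A]
    (τ : A →ₗ[ℂ] ℂ)
    (hpos : ∀ a : A, 0 ≤ a → 0 ≤ τ a)
    (hfaith : ∀ a : A, 0 ≤ a → τ a = 0 → a = 0)
    (E : A →ₗ[ℂ] A)
    (hEtrace : ∀ x : A, τ (E x) = τ x)
    (hSchwarz : ∀ x : A, star (E x) * E x ≤ E (star x * x))
    (hBC : IsBuresContractive τ E)
    (ω : ℂ) (hω : ‖ω‖ = 1) (x : A) (hx : x ≠ 0) (heig : E x = ω • x) :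
    ω = 1 := by
  have hE1 : E 1 = 1 := map_one_of_schwarz hSchwarz hEtrace hfaith
  obtain ⟨hxE, hxE'⟩ := mem_mulDomain_of_eigen hSchwarz hEtrace hfaith hE1 hω heig
  obtain ⟨c, rfl⟩ := exists_eq_algebraMap_of_mem_mulDomain hpos hfaith hEtrace
    (fun a ha => map_nonneg_of_schwarz hSchwarz ha) hE1 hBC hxE hxE'
  have : Nontrivial A := ⟨⟨_, 0, hx⟩⟩
  have hc : c ≠ 0 := by rintro rfl; simp at hx
  rw [Algebra.algebraMap_eq_smul_one, map_smul, hE1, smul_smul] at heig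
  have hcω : c = ω * c := smul_left_injective ℂ one_ne_zero heig
  exact mul_right_cancel₀ hc (hcω.symm.trans (one_mul c).symm)

/-- the peripheral point spectrum of a Bures contractive Schwarz channel
is {1}: any unimodular eigenvalue equals 1. -/
theorem peripheral_point_spectrum_trivial {A : Type*}
    [CStarAlgebra A] [PartialOrder A] [StarOrderedRing A]
    (τ : A →ₗ[ℂ] ℂ)
    (hpos : ∀ a : A, 0 ≤ a → 0 ≤ τ a)
    (hfaith : ∀ a : A, 0 ≤ a → τ a = 0 → a = 0)
    (htracial : ∀ x y : A, τ (x * y) = τ (y * x))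
    (E : A →ₗ[ℂ] A)
    (hEtrace : ∀ x : A, τ (E x) = τ x)
    (hSchwarz : ∀ x : A, star (E x) * E x ≤ E (star x * x))
    (hBC : IsBuresContractive τ E)
    (ω : ℂ) (hω : ‖ω‖ = 1) (x : A) (hx : x ≠ 0) (heig : E x = ω • x) :
    ω = 1 :=
  peripheral_point_spectrum_trivial_general τ hpos hfaith E hEtrace hSchwarz hBC ω hω x hx heig
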